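/- (Proposition 3.) Let Λ be a cross-impact model and c > 0 a constant such that for every triple (Σ,Ω,R) the matrix Λ(Σ,Ω,R) is symmetric, positive semidefinite, and satisfies Λ(Σ,Ω,R) · Ω · Λ(Σ,Ω,R)ᵀ = c·Σ (return covariance consistency up to the multiplicative constant c). Then for every triple (Σ,Ω,R) one has Λ(Σ,Ω,R) = √c · Λ_kyle(Σ,Ω), i.e. Λ equals the Kyle model up to a multiplicative constant. -/

import Mathlib

open Matrix
open scoped Classical

/-- `sqrtm A` is the unique symmetric positive semidefinite square root of a
symmetric positive semidefinite real matrix `A` (junk value `0` otherwise). -/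
noncomputable def sqrtm {n : ℕ} (A : Matrix (Fin n) (Fin n) ℝ) : Matrix (Fin n) (Fin n) ℝ :=
  if h : A.PosSemidef then
    h.1.eigenvectorUnitary.1 * diagonal ((↑) ∘ Real.sqrt ∘ h.1.eigenvalues) *
      (star h.1.eigenvectorUnitary : Matrix (Fin n) (Fin n) ℝ)
  else 0

/-- The Kyle cross-impact matrix `Λ_kyle(Σ,Ω) = (√Ω)⁻¹ √(√Ω Σ √Ω) (√Ω)⁻¹`. -/
noncomputable def kyle {n : ℕ} (S W : Matrix (Fin n) (Fin n) ℝ) : Matrix (Fin n) (Fin n) ℝ :=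
  (sqrtm W)⁻¹ * sqrtm (sqrtm W * S * sqrtm W) * (sqrtm W)⁻¹

/-! Conjugating by `B = √Ω`, consistency `Λ Ω Λ = c Σ` becomes `(B Λ B)² = c (B Σ B)`. Since
`B Λ B` is positive semidefinite, uniqueness of positive semidefinite square roots gives
`B Λ B = √c √(B Σ B)`, and `B` is invertible because `Ω` is positive definite. -/

open scoped MatrixOrder

section
variable {n : ℕ} {A B L S W : Matrix (Fin n) (Fin n) ℝ}

lemma sqrtm_eq_cfcSqrt (hA : A.PosSemidef) : sqrtm A = CFC.sqrt A := by
  rw [sqrtm, dif_pos hA, CFC.sqrt_eq_real_sqrt A hA.nonneg, cfcₙ_eq_cfc, hA.1.cfc_eq]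
  rfl

lemma posSemidef_sqrtm (hA : A.PosSemidef) : (sqrtm A).PosSemidef := by
  rw [sqrtm_eq_cfcSqrt hA]
  exact (CFC.sqrt_nonneg A).posSemidef

lemma sqrtm_mul_self (hA : A.PosSemidef) : sqrtm A * sqrtm A = A := by
  rw [sqrtm_eq_cfcSqrt hA]
  exact CFC.sqrt_mul_sqrt_self A hA.nonneg

lemma sqrtm_eq_of_mul_self_eq (hB : B.PosSemidef) (h : B * B = A) : sqrtm A = B := by
  have hA : A.PosSemidef := by
    rw [← h]
    simpa only [hB.1.eq] using posSemidef_conjTranspose_mul_self B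
  rw [sqrtm_eq_cfcSqrt hA]
  exact CFC.sqrt_unique h hB.nonneg

lemma sqrtm_smul (hA : A.PosSemidef) {c : ℝ} (hc : 0 ≤ c) :
    sqrtm (c • A) = Real.sqrt c • sqrtm A := by
  refine sqrtm_eq_of_mul_self_eq ((posSemidef_sqrtm hA).smul (Real.sqrt_nonneg c)) ?_
  rw [smul_mul_smul_comm, sqrtm_mul_self hA, Real.mul_self_sqrt hc]

lemma isUnit_det_sqrtm (hW : W.PosDef) : IsUnit (sqrtm W).det := by
  have hdet : (sqrtm W).det * (sqrtm W).det = W.det := by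
    rw [← det_mul, sqrtm_mul_self hW.posSemidef]
  exact isUnit_iff_ne_zero.2 fun h0 => hW.det_pos.ne' (by rw [← hdet, h0, zero_mul])

lemma kyle_smul (hS : S.PosSemidef) (hW : W.PosSemidef) {c : ℝ} (hc : 0 ≤ c) :
    kyle (c • S) W = Real.sqrt c • kyle S W := by
  have hB := posSemidef_sqrtm hW
  have hBSB : (sqrtm W * S * sqrtm W).PosSemidef := by
    simpa only [hB.1.eq] using hS.mul_mul_conjTranspose_same (sqrtm W)
  rw [kyle, kyle, Matrix.mul_smul, Matrix.smul_mul, sqrtm_smul hBSB hc, Matrix.mul_smul,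
    Matrix.smul_mul]

lemma eq_kyle_of_mul_mul_eq (hL : L.PosSemidef) (hW : W.PosDef) (h : L * W * L = S) :
    L = kyle S W := by
  set B := sqrtm W
  have hB : B.PosSemidef := posSemidef_sqrtm hW.posSemidef
  have hBB : B * B = W := sqrtm_mul_self hW.posSemidef
  have hBLB : (B * L * B).PosSemidef := by
    simpa only [hB.1.eq] using hL.mul_mul_conjTranspose_same B
  have hsq : sqrtm (B * S * B) = B * L * B := by
    refine sqrtm_eq_of_mul_self_eq hBLB ?_
    rw [← h, ← hBB]
    noncomm_ring
  have hdet := isUnit_det_sqrtm hW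
  rw [kyle, hsq]
  calc L = (B⁻¹ * B) * L * (B * B⁻¹) := by
        rw [nonsing_inv_mul B hdet, mul_nonsing_inv B hdet, one_mul, mul_one]
    _ = B⁻¹ * (B * L * B) * B⁻¹ := by noncomm_ring

end

theorem kyle_unique_symm_psd_covConsistent_general {n : ℕ}
    (Λ : Matrix (Fin n) (Fin n) ℝ → Matrix (Fin n) (Fin n) ℝ → Matrix (Fin n) (Fin n) ℝ → Matrix (Fin n) (Fin n) ℝ)
    (c : ℝ) (hc : 0 < c)
    (hpsd : ∀ S W R : Matrix (Fin n) (Fin n) ℝ, S.PosSemidef → W.PosDef → (Λ S W R).PosSemidef)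
    (hcons : ∀ S W R : Matrix (Fin n) (Fin n) ℝ, S.PosSemidef → W.PosDef →
      Λ S W R * W * (Λ S W R)ᵀ = c • S) :
    ∀ S W R : Matrix (Fin n) (Fin n) ℝ, S.PosSemidef → W.PosDef →
      Λ S W R = Real.sqrt c • kyle S W := by
  intro S W R hS hW
  have hL := hpsd S W R hS hW
  have hLWL : Λ S W R * W * Λ S W R = c • S := by
    simpa only [← conjTranspose_eq_transpose_of_trivial, hL.1.eq] using hcons S W R hS hW
  rw [eq_kyle_of_mul_mul_eq hL hW hLWL, kyle_smul hS hW.posSemidef hc.le]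

/-- Proposition 3: a symmetric, positive semidefinite, return covariance
consistent cross-impact model equals the Kyle model up to a multiplicative constant. -/
theorem kyle_unique_symm_psd_covConsistent {n : ℕ}
    (Λ : Matrix (Fin n) (Fin n) ℝ → Matrix (Fin n) (Fin n) ℝ → Matrix (Fin n) (Fin n) ℝ → Matrix (Fin n) (Fin n) ℝ)
    (c : ℝ) (hc : 0 < c)
    (hsymm : ∀ S W R : Matrix (Fin n) (Fin n) ℝ, S.PosSemidef → W.PosDef → (Λ S W R).IsSymm)
    (hpsd : ∀ S W R : Matrix (Fin n) (Fin n) ℝ, S.PosSemidef → W.PosDef → (Λ S W R).PosSemidef)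
    (hcons : ∀ S W R : Matrix (Fin n) (Fin n) ℝ, S.PosSemidef → W.PosDef →
      Λ S W R * W * (Λ S W R)ᵀ = c • S) :
    ∀ S W R : Matrix (Fin n) (Fin n) ℝ, S.PosSemidef → W.PosDef →
      Λ S W R = Real.sqrt c • kyle S W :=
  kyle_unique_symm_psd_covConsistent_general Λ c hc hpsd hcons
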